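/- Let n = 2t and let E₀, E₁, …, E_{2^t} be 𝔽₂-subspaces of 𝔽₂ⁿ, each of dimension t, with Eᵢ ∩ Eⱼ = {0} for all i ≠ j. For 0 ≤ i ≤ t−1 define g_i : 𝔽₂ⁿ → 𝔽₂ by g_i(x) = ∑_{0 ≤ k ≤ 2^t−1, bit i of k equals 1} 1_{E_k}(x) + 1_{E_{2^t}}(x) + 1 (sum in 𝔽₂), and let G = (g₀, g₁, …, g_{r−1}) be the (n,r)-function with 2 ≤ r ≤ t. Then G is vectorial bent: for every μ̃ ∈ 𝔽₂^r∖{0} and every ν ∈ 𝔽₂ⁿ, W_G(μ̃,ν) ∈ {2^t, −2^t}. -/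
import Mathlib


def dotp {n : ℕ} (v x : Fin n → ZMod 2) : ZMod 2 := ∑ i, v i * x i

def wht {n : ℕ} (f : (Fin n → ZMod 2) → ZMod 2) (ν : Fin n → ZMod 2) : ℤ :=
  ∑ x : Fin n → ZMod 2, (-1 : ℤ) ^ (f x + dotp ν x).val

def whtF {n m : ℕ} (F : (Fin n → ZMod 2) → (Fin m → ZMod 2))
    (μ : Fin m → ZMod 2) (ν : Fin n → ZMod 2) : ℤ :=
  wht (fun x => dotp μ (F x)) ν

def cw {n m : ℕ} (F : (Fin n → ZMod 2) → (Fin m → ZMod 2))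
    (μ : Fin m → ZMod 2) (ν : Fin n → ZMod 2) :
    {x : Fin n → ZMod 2 // x ≠ 0} → ZMod 2 :=
  fun x => dotp μ (F x.1) + dotp ν x.1

def codeF {n m : ℕ} (F : (Fin n → ZMod 2) → (Fin m → ZMod 2)) :
    Set ({x : Fin n → ZMod 2 // x ≠ 0} → ZMod 2) :=
  Set.range fun p : (Fin m → ZMod 2) × (Fin n → ZMod 2) => cw F p.1 p.2

def wt {n : ℕ} (c : {x : Fin n → ZMod 2 // x ≠ 0} → ZMod 2) : ℕ :=
  (Finset.univ.filter fun x => c x = 1).card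

def IsMinimal {n : ℕ} (C : Set ({x : Fin n → ZMod 2 // x ≠ 0} → ZMod 2)) : Prop :=
  ∀ c ∈ C, ∀ c' ∈ C, c ≠ 0 → c' ≠ 0 →
    {x | c' x = 1} ⊆ {x | c x = 1} → c' = c

def weights {n m : ℕ} (F : (Fin n → ZMod 2) → (Fin m → ZMod 2)) : Set ℕ :=
  {w | ∃ c ∈ codeF F, c ≠ 0 ∧ wt c = w}

private lemma zmod2_one {a : ZMod 2} (h : a ≠ 0) : a = 1 := by revert h; revert a; decide

private lemma np_add (a b : ZMod 2) :
    ((-1:ℤ)) ^ (a + b).val = (-1:ℤ)^a.val * (-1:ℤ)^b.val := by revert a b; decide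

private lemma dotp_zero_right {n : ℕ} (ν : Fin n → ZMod 2) : dotp ν 0 = 0 := by
  simp [dotp]

private lemma dotp_zero_left {n : ℕ} (x : Fin n → ZMod 2) : dotp 0 x = 0 := by
  simp [dotp]

private lemma dotp_add_right {n : ℕ} (ν x y : Fin n → ZMod 2) :
    dotp ν (x + y) = dotp ν x + dotp ν y := by
  simp [dotp, Pi.add_apply, mul_add, Finset.sum_add_distrib]

private lemma dotp_single {n : ℕ} (ν : Fin n → ZMod 2) (i : Fin n) :
    dotp ν (fun j => if j = i then 1 else 0) = ν i := by
  simp [dotp, mul_ite]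

private lemma sum_char_eq_zero {n : ℕ} (ν : Fin n → ZMod 2) (s : Finset (Fin n → ZMod 2))
    (x₀ : Fin n → ZMod 2) (hx : dotp ν x₀ = 1) (hs : ∀ a ∈ s, a + x₀ ∈ s) :
    ∑ x ∈ s, ((-1:ℤ)) ^ (dotp ν x).val = 0 := by
  apply Finset.sum_involution (fun a _ => a + x₀)
  · intro a _
    rw [dotp_add_right, np_add, hx]
    have h1 : ((1:ZMod 2)).val = 1 := rfl
    rw [h1]; ring
  · intro a _ _
    intro h
    have hx0 : x₀ = 0 := by
      have := congrArg (fun z => z - a) h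
      simpa [add_comm] using this
    rw [hx0, dotp_zero_right] at hx
    exact one_ne_zero hx.symm
  · intro a ha; exact hs a ha
  · intro a ha
    have hxx : x₀ + x₀ = 0 := by
      funext i; exact CharTwo.add_self_eq_zero (x₀ i)
    rw [add_assoc, hxx, add_zero]

private lemma sum_char_univ {n : ℕ} (ν : Fin n → ZMod 2) (hν : ν ≠ 0) :
    ∑ x : Fin n → ZMod 2, ((-1:ℤ)) ^ (dotp ν x).val = 0 := by
  obtain ⟨i, hi⟩ : ∃ i, ν i ≠ 0 := by
    by_contra h
    push_neg at h
    exact hν (funext fun i => h i)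
  apply sum_char_eq_zero ν Finset.univ (fun j => if j = i then 1 else 0)
  · rw [dotp_single]; exact zmod2_one hi
  · intro a _; exact Finset.mem_univ _

open scoped Classical in
theorem stmt12 (t n r : ℕ) (hn : n = 2 * t) (hr1 : 2 ≤ r) (hr2 : r ≤ t)
    (E : ℕ → Submodule (ZMod 2) (Fin n → ZMod 2))
    (hdim : ∀ k ≤ 2 ^ t, Module.finrank (ZMod 2) (E k) = t)
    (hint : ∀ k l, k ≤ 2 ^ t → l ≤ 2 ^ t → k ≠ l → E k ⊓ E l = ⊥)
    (G : (Fin n → ZMod 2) → (Fin r → ZMod 2))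
    (hG : ∀ x i, G x i =
      (∑ k ∈ Finset.range (2 ^ t),
        if Nat.testBit k i.1 then (if x ∈ E k then (1 : ZMod 2) else 0) else 0)
      + (if x ∈ E (2 ^ t) then (1 : ZMod 2) else 0) + 1) :
    ∀ μt : Fin r → ZMod 2, μt ≠ 0 → ∀ ν : Fin n → ZMod 2,
      whtF G μt ν = 2 ^ t ∨ whtF G μt ν = -2 ^ t := by
  intro μt hμ ν
  have hT1 : (1:ℕ) ≤ 2^t := Nat.one_le_two_pow
  -- finsets of the subspaces
  set Ek : ℕ → Finset (Fin n → ZMod 2) := fun k => Finset.univ.filter (· ∈ E k) with hEk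
  have hmemEk : ∀ k x, x ∈ Ek k ↔ x ∈ E k := by intro k x; simp [hEk]
  have hcard : ∀ k ≤ 2^t, (Ek k).card = 2^t := by
    intro k hk
    have h1 : (Ek k).card = Fintype.card (E k) := (Fintype.card_subtype _).symm
    have h2 := Module.card_eq_pow_finrank (K := ZMod 2) (V := E k)
    rw [hdim k hk, ZMod.card] at h2
    rw [h1, h2]
  have huniq : ∀ (x : Fin n → ZMod 2), x ≠ 0 → ∀ k l, k ≤ 2^t → l ≤ 2^t →
      x ∈ E k → x ∈ E l → k = l := by
    intro x hx k l hk hl hxk hxl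
    by_contra hne
    have hb := hint k l hk hl hne
    have hm : x ∈ E k ⊓ E l := ⟨hxk, hxl⟩
    rw [hb, Submodule.mem_bot] at hm
    exact hx hm
  set A : ℕ → Finset (Fin n → ZMod 2) := fun k => (Ek k).erase 0 with hA
  have hmemA : ∀ k x, x ∈ A k ↔ x ≠ 0 ∧ x ∈ E k := by
    intro k x
    constructor
    · intro hx
      exact ⟨Finset.ne_of_mem_erase hx, (hmemEk k x).mp (Finset.mem_of_mem_erase hx)⟩
    · intro ⟨h1, h2⟩
      exact Finset.mem_erase.mpr ⟨h1, (hmemEk k x).mpr h2⟩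
  have hAcard : ∀ k ≤ 2^t, (A k).card = 2^t - 1 := by
    intro k hk
    have : (A k).card = (Ek k).card - 1 :=
      Finset.card_erase_of_mem ((hmemEk k 0).mpr (E k).zero_mem)
    rw [this, hcard k hk]
  have hdisj : ∀ k ∈ Finset.range (2^t+1), ∀ l ∈ Finset.range (2^t+1), k ≠ l →
      Disjoint (A k) (A l) := by
    intro k hk l hl hne
    rw [Finset.disjoint_left]
    intro x hxk hxl
    rw [hmemA] at hxk hxl
    exact hne (huniq x hxk.1 k l (Nat.lt_succ_iff.mp (Finset.mem_range.mp hk))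
      (Nat.lt_succ_iff.mp (Finset.mem_range.mp hl)) hxk.2 hxl.2)
  have hdisj' : Set.PairwiseDisjoint (↑(Finset.range (2^t+1))) A := by
    intro k hk l hl hne
    exact hdisj k (Finset.mem_coe.mp hk) l (Finset.mem_coe.mp hl) hne
  have hcardU : ((Finset.range (2^t+1)).biUnion A).card = 2^n - 1 := by
    rw [Finset.card_biUnion hdisj]
    have h1 : ∀ k ∈ Finset.range (2^t+1), (A k).card = 2^t - 1 := fun k hk =>
      hAcard k (Nat.lt_succ_iff.mp (Finset.mem_range.mp hk))
    rw [Finset.sum_congr rfl h1, Finset.sum_const, Finset.card_range, smul_eq_mul]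
    obtain ⟨m, hm⟩ : ∃ m, 2^t = m + 1 := ⟨2^t - 1, by omega⟩
    have h2 : 2^n = 2^t * 2^t := by rw [hn, two_mul, pow_add]
    rw [h2, hm]
    have h3 : (m + 1 + 1) * (m + 1 - 1) = m * m + 2 * m := by
      rw [Nat.add_sub_cancel]; ring
    have h4 : (m + 1) * (m + 1) = m * m + 2 * m + 1 := by ring
    rw [h3, h4, Nat.add_sub_cancel]
  have hU : (Finset.range (2^t+1)).biUnion A = Finset.univ.erase 0 := by
    apply Finset.eq_of_subset_of_card_le
    · intro x hx
      rw [Finset.mem_biUnion] at hx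
      obtain ⟨k, _, hxk⟩ := hx
      exact Finset.mem_erase.mpr ⟨((hmemA k x).mp hxk).1, Finset.mem_univ x⟩
    · rw [Finset.card_erase_of_mem (Finset.mem_univ 0), hcardU]
      have h1 : Fintype.card (Fin n → ZMod 2) = 2^n := by
        simp [ZMod.card]
      rw [Finset.card_univ, h1]
  -- the value of dotp μt (G x) on each punctured subspace
  set v : ℕ → ZMod 2 := fun k =>
    if k < 2^t then dotp μt (fun i => (if Nat.testBit k i.1 then 1 else 0) + 1) else 0 with hv
  have hval : ∀ k ≤ 2^t, ∀ x, x ≠ 0 → x ∈ E k → dotp μt (G x) = v k := by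
    intro k hk x hx hxE
    have hnot : ∀ k', k' ≤ 2^t → k' ≠ k → x ∉ E k' := by
      intro k' hk' hne hmem
      exact hne (huniq x hx k' k hk' hk hmem hxE)
    rcases lt_or_eq_of_le hk with hlt | heq
    · have hGx : ∀ i : Fin r, G x i = (if Nat.testBit k i.1 then 1 else 0) + 1 := by
        intro i
        rw [hG]
        have hsum : (∑ k' ∈ Finset.range (2^t),
            if Nat.testBit k' i.1 then (if x ∈ E k' then (1:ZMod 2) else 0) else 0)
            = if Nat.testBit k i.1 then 1 else 0 := by
          rw [Finset.sum_eq_single k]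
          · simp [hxE]
          · intro k' hk' hne
            have hnm := hnot k' (le_of_lt (Finset.mem_range.mp hk')) hne
            simp [hnm]
          · intro habs; exact absurd (Finset.mem_range.mpr hlt) habs
        rw [hsum]
        have hne2 : x ∉ E (2^t) := hnot (2^t) le_rfl (by omega)
        simp [hne2]
      have h1 : dotp μt (G x) = dotp μt (fun i => (if Nat.testBit k i.1 then 1 else 0) + 1) := by
        simp only [dotp]
        exact Finset.sum_congr rfl fun i _ => by rw [hGx i]
      rw [h1, hv]
      simp only [if_pos hlt]
    · have hGx : ∀ i : Fin r, G x i = 0 := by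
        intro i
        rw [hG]
        have hsum : (∑ k' ∈ Finset.range (2^t),
            if Nat.testBit k' i.1 then (if x ∈ E k' then (1:ZMod 2) else 0) else 0) = 0 := by
          apply Finset.sum_eq_zero
          intro k' hk'
          have hk'2 : k' < 2^t := Finset.mem_range.mp hk'
          have hnm := hnot k' (le_of_lt hk'2) (by omega)
          simp [hnm]
        rw [hsum]
        rw [heq] at hxE
        rw [if_pos hxE]
        decide
      have h1 : dotp μt (G x) = 0 := by
        simp only [dotp]
        apply Finset.sum_eq_zero
        intro i _
        rw [hGx i, mul_zero]
      rw [h1, hv]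
      simp [heq]
  -- value at 0
  have hbit0 : ∀ i : Fin r, (∑ k ∈ Finset.range (2^t),
      if Nat.testBit k i.1 then (1:ZMod 2) else 0) = 0 := by
    intro i
    have hi : i.1 < t := lt_of_lt_of_le i.isLt hr2
    set j : ℕ := if i.1 = 0 then 1 else 0 with hj
    have hji : j ≠ i.1 := by rw [hj]; split <;> omega
    have hjt : j < t := by rw [hj]; split <;> omega
    have hpowj : 2^j < 2^t := Nat.pow_lt_pow_right one_lt_two hjt
    apply Finset.sum_involution (fun k _ => k ^^^ 2^j)
    · intro k _
      have hb : Nat.testBit (k ^^^ 2^j) i.1 = Nat.testBit k i.1 := by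
        rw [Nat.testBit_xor, Nat.testBit_two_pow]
        simp [hji]
      rw [hb]
      split <;> decide
    · intro k _ _ h
      have h2 : Nat.testBit (k ^^^ 2^j) j = !(Nat.testBit k j) := by
        rw [Nat.testBit_xor, Nat.testBit_two_pow]
        simp
      rw [h] at h2
      simp at h2
    · intro k _
      simp [Nat.xor_assoc]
    · intro k hk
      exact Finset.mem_range.mpr (Nat.xor_lt_two_pow (Finset.mem_range.mp hk) hpowj)
  have hG0 : dotp μt (G 0) = 0 := by
    have h0 : ∀ i : Fin r, G 0 i = 0 := by
      intro i
      rw [hG]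
      have e1 : (∑ k ∈ Finset.range (2^t),
          if Nat.testBit k i.1 then (if (0:Fin n → ZMod 2) ∈ E k then (1:ZMod 2) else 0) else 0)
          = ∑ k ∈ Finset.range (2^t), if Nat.testBit k i.1 then (1:ZMod 2) else 0 :=
        Finset.sum_congr rfl fun k _ => by simp [(E k).zero_mem]
      rw [e1, hbit0 i, if_pos (E (2^t)).zero_mem]
      decide
    simp only [dotp]
    apply Finset.sum_eq_zero
    intro i _
    rw [h0 i, mul_zero]
  -- sum of signs over range (2^t)
  obtain ⟨i₀, hi₀⟩ : ∃ i, μt i = 1 := by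
    by_contra hcon
    push_neg at hcon
    apply hμ
    funext i
    exact (show ∀ a : ZMod 2, a ≠ 1 → a = 0 by decide) (μt i) (hcon i)
  have hpow0 : 2^(i₀.1) < 2^t := Nat.pow_lt_pow_right one_lt_two (lt_of_lt_of_le i₀.isLt hr2)
  have hvflip : ∀ k < 2^t, v (k ^^^ 2^(i₀.1)) = v k + 1 := by
    intro k hk
    have hk2 : k ^^^ 2^(i₀.1) < 2^t := Nat.xor_lt_two_pow hk hpow0
    have hbv : ∀ i : Fin r, ((if Nat.testBit (k ^^^ 2^(i₀.1)) i.1 then (1:ZMod 2) else 0) + 1)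
        = (((if Nat.testBit k i.1 then (1:ZMod 2) else 0) + 1) + (if i = i₀ then 1 else 0)) := by
      intro i
      rw [Nat.testBit_xor, Nat.testBit_two_pow]
      by_cases h2 : (i₀:ℕ) = i.1
      · have h2' : i = i₀ := Fin.ext h2.symm
        by_cases h1 : Nat.testBit k i.1 <;> simp [h1, h2, h2'] <;> decide
      · have h2' : i ≠ i₀ := fun h => h2 (by rw [h])
        by_cases h1 : Nat.testBit k i.1 <;> simp [h1, h2, h2']
    have e1 : v (k ^^^ 2^(i₀.1))
        = dotp μt (fun i => (if Nat.testBit (k ^^^ 2^(i₀.1)) i.1 then 1 else 0) + 1) := by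
      rw [hv]; simp only [if_pos hk2]
    have e2 : dotp μt (fun i => (if Nat.testBit (k ^^^ 2^(i₀.1)) i.1 then (1:ZMod 2) else 0) + 1)
        = dotp μt ((fun i => (if Nat.testBit k i.1 then (1:ZMod 2) else 0) + 1)
            + (fun i => if i = i₀ then 1 else 0)) := by
      simp only [dotp]
      exact Finset.sum_congr rfl fun i _ => by rw [hbv i]; rfl
    rw [e1, e2, dotp_add_right, dotp_single, hi₀, hv]
    simp only [if_pos hk]
  have hepsum : ∑ k ∈ Finset.range (2^t), ((-1:ℤ))^(v k).val = 0 := by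
    apply Finset.sum_involution (fun k _ => k ^^^ 2^(i₀.1))
    · intro k hk
      rw [hvflip k (Finset.mem_range.mp hk), np_add]
      have h1 : ((1:ZMod 2)).val = 1 := rfl
      rw [h1]; ring
    · intro k _ _ h
      have h2 : Nat.testBit (k ^^^ 2^(i₀.1)) i₀.1 = !(Nat.testBit k i₀.1) := by
        rw [Nat.testBit_xor, Nat.testBit_two_pow]
        simp
      rw [h] at h2
      simp at h2
    · intro k _
      simp [Nat.xor_assoc]
    · intro k hk
      exact Finset.mem_range.mpr (Nat.xor_lt_two_pow (Finset.mem_range.mp hk) hpow0)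
  have hv2t : v (2^t) = 0 := by rw [hv]; simp
  have heps1 : ∑ k ∈ Finset.range (2^t+1), ((-1:ℤ))^(v k).val = 1 := by
    rw [Finset.sum_range_succ, hepsum, hv2t]
    rfl
  -- character sums over the subspaces
  set χ : (Fin n → ZMod 2) → ℤ := fun x => (-1:ℤ)^(dotp ν x).val with hχ
  set S : ℕ → ℤ := fun k => ∑ x ∈ Ek k, χ x with hS
  have hχ0 : χ 0 = 1 := by rw [hχ]; simp only [dotp_zero_right]; rfl
  have hS0 : ∀ k ≤ 2^t, (¬ ∀ x ∈ E k, dotp ν x = 0) → S k = 0 := by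
    intro k _ hnp
    push_neg at hnp
    obtain ⟨x₀, hx₀E, hx₀⟩ := hnp
    apply sum_char_eq_zero ν (Ek k) x₀ (zmod2_one hx₀)
    intro a ha
    exact (hmemEk k _).mpr ((E k).add_mem ((hmemEk k a).mp ha) hx₀E)
  have hS1 : ∀ k ≤ 2^t, (∀ x ∈ E k, dotp ν x = 0) → S k = 2^t := by
    intro k hk hp
    have h1 : ∀ x ∈ Ek k, χ x = 1 := by
      intro x hx
      rw [hχ]
      simp only []
      rw [hp x ((hmemEk k x).mp hx)]
      rfl
    rw [hS]
    simp only []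
    rw [Finset.sum_congr rfl h1, Finset.sum_const, hcard k hk]
    simp
  have hSA : ∀ k ≤ 2^t, ∑ x ∈ A k, χ x = S k - 1 := by
    intro k hk
    have h0 : (0:Fin n → ZMod 2) ∈ Ek k := (hmemEk k 0).mpr (E k).zero_mem
    have h2 := Finset.add_sum_erase (Ek k) χ h0
    rw [hχ0] at h2
    have hAe : A k = (Ek k).erase 0 := rfl
    rw [hAe]
    have hSe : S k = ∑ x ∈ Ek k, χ x := rfl
    rw [hSe]
    linarith
  -- main computation
  have hwht : whtF G μt ν = ∑ k ∈ Finset.range (2^t+1), ((-1:ℤ))^(v k).val * S k := by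
    have step1 : whtF G μt ν
        = ∑ x : Fin n → ZMod 2, ((-1:ℤ))^((dotp μt (G x) + dotp ν x).val) := rfl
    rw [step1]
    rw [← Finset.add_sum_erase Finset.univ _ (Finset.mem_univ (0:Fin n → ZMod 2))]
    have h00 : ((-1:ℤ))^((dotp μt (G 0) + dotp ν 0).val) = 1 := by
      rw [hG0, dotp_zero_right]; rfl
    rw [h00, ← hU, Finset.sum_biUnion hdisj']
    have hterm : ∀ k ∈ Finset.range (2^t+1),
        (∑ x ∈ A k, ((-1:ℤ))^((dotp μt (G x) + dotp ν x).val))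
        = ((-1:ℤ))^(v k).val * (S k - 1) := by
      intro k hk
      have hk' : k ≤ 2^t := by rw [Finset.mem_range] at hk; omega
      have h1 : ∀ x ∈ A k, ((-1:ℤ))^((dotp μt (G x) + dotp ν x).val)
          = ((-1:ℤ))^(v k).val * χ x := by
        intro x hx
        obtain ⟨hx0, hxE⟩ := (hmemA k x).mp hx
        rw [hval k hk' x hx0 hxE, np_add]
      rw [Finset.sum_congr rfl h1, ← Finset.mul_sum, hSA k hk']
    rw [Finset.sum_congr rfl hterm]
    have hsplit : ∑ k ∈ Finset.range (2^t+1), ((-1:ℤ))^(v k).val * (S k - 1)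
        = (∑ k ∈ Finset.range (2^t+1), ((-1:ℤ))^(v k).val * S k)
          - ∑ k ∈ Finset.range (2^t+1), ((-1:ℤ))^(v k).val := by
      rw [← Finset.sum_sub_distrib]
      exact Finset.sum_congr rfl fun k _ => by ring
    rw [hsplit, heps1]
    ring
  rcases eq_or_ne ν 0 with h0 | hν0
  · left
    rw [hwht]
    have h1 : ∀ k ∈ Finset.range (2^t+1), ((-1:ℤ))^(v k).val * S k
        = ((-1:ℤ))^(v k).val * 2^t := by
      intro k hk
      rw [hS1 k (by rw [Finset.mem_range] at hk; omega)
        (fun x _ => by rw [h0, dotp_zero_left])]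
    rw [Finset.sum_congr rfl h1, ← Finset.sum_mul, heps1, one_mul]
  · have hCsum : ∑ k ∈ Finset.range (2^t+1), S k = 2^t := by
      have h1 : ∀ k ∈ Finset.range (2^t+1), S k = 1 + ∑ x ∈ A k, χ x := by
        intro k hk
        rw [hSA k (by rw [Finset.mem_range] at hk; omega)]
        ring
      have hb : ∑ k ∈ Finset.range (2^t+1), ∑ x ∈ A k, χ x
          = ∑ x ∈ Finset.univ.erase 0, χ x := by
        rw [← hU]
        exact (Finset.sum_biUnion hdisj').symm
      have h2 : ∑ x ∈ Finset.univ.erase 0, χ x = -1 := by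
        have h3 := Finset.add_sum_erase Finset.univ χ (Finset.mem_univ (0:Fin n → ZMod 2))
        have h4 : ∑ x ∈ Finset.univ, χ x = 0 := sum_char_univ ν hν0
        rw [h4, hχ0] at h3
        linarith
      rw [Finset.sum_congr rfl h1, Finset.sum_add_distrib, hb, h2,
        Finset.sum_const, Finset.card_range, nsmul_eq_mul, mul_one]
      push_cast
      ring
    set K := (Finset.range (2^t+1)).filter (fun k => S k ≠ 0) with hK
    have hKval : ∀ k ∈ K, S k = 2^t := by
      intro k hk
      rw [hK, Finset.mem_filter, Finset.mem_range] at hk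
      rcases Classical.em (∀ x ∈ E k, dotp ν x = 0) with hp | hp
      · exact hS1 k (by omega) hp
      · exact absurd (hS0 k (by omega) hp) hk.2
    have hKsum : ∑ k ∈ K, S k = 2^t := by
      rw [hK]
      rw [Finset.sum_filter_ne_zero]
      exact hCsum
    have hKcard : K.card = 1 := by
      have h1 : ∑ k ∈ K, S k = (K.card : ℤ) * 2^t := by
        rw [Finset.sum_congr rfl hKval, Finset.sum_const, nsmul_eq_mul]
      rw [hKsum] at h1
      have h2t : (0:ℤ) < 2^t := by positivity
      have h2 : (K.card : ℤ) = 1 := by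
        have h3 : (K.card : ℤ) * 2^t = 1 * 2^t := by rw [one_mul, ← h1]
        exact mul_right_cancel₀ (ne_of_gt h2t) h3
      exact_mod_cast h2
    obtain ⟨k₀, hk₀⟩ := Finset.card_eq_one.mp hKcard
    have hwf : whtF G μt ν = ((-1:ℤ))^(v k₀).val * 2^t := by
      rw [hwht]
      have hsub : K ⊆ Finset.range (2^t+1) := Finset.filter_subset _ _
      rw [← Finset.sum_subset hsub (by
        intro k hk hnk
        rw [hK, Finset.mem_filter] at hnk
        push_neg at hnk
        have : S k = 0 := by
          by_contra hc
          exact hc (hnk hk)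
        rw [this, mul_zero])]
      rw [hk₀, Finset.sum_singleton]
      rw [hKval k₀ (hk₀ ▸ Finset.mem_singleton_self k₀)]
    rcases Nat.even_or_odd ((v k₀).val) with he | ho
    · left
      rw [hwf, he.neg_one_pow, one_mul]
    · right
      rw [hwf, ho.neg_one_pow]
      ring
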